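/- Let p ∈ ℕ and M = (M_1,…,M_p) : I^p → I^p be a mean-type mapping consisting of symmetric residual means, and suppose there exists a unique M-invariant mean K : I^p → I (K ∘ M = K) and that the iterates M^n converge pointwise to (K,…,K). Then for each x ∈ I^p, either M^{n_0}(x) is a constant vector for some n_0, or lim_{n→∞} Var(M^{n+1}(x)) / (Var(M^n(x)))² = (1/4)·Var(ξ_{M_1}(K(x)), …, ξ_{M_p}(K(x))). -/

import Mathlib

open Filter

namespace SpeedAux

open Filter Finset

noncomputable def Vr (p : ℕ) (v : Fin p → ℝ) : ℝ :=
  (∑ j, (v j)^2) / p - ((∑ j, v j) / p)^2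

lemma sum_sq_expand (p : ℕ) (v : Fin p → ℝ) (m : ℝ) :
    ∑ j, (v j - m)^2 = (∑ j, (v j)^2) - 2*m*(∑ j, v j) + p*m^2 := by
  simp only [sub_sq]
  rw [Finset.sum_add_distrib, Finset.sum_sub_distrib, Finset.sum_const, Finset.card_univ,
    Fintype.card_fin, nsmul_eq_mul]
  rw [show (∑ x : Fin p, 2 * v x * m) = 2*m*(∑ j, v j) by
    rw [Finset.mul_sum]; exact Finset.sum_congr rfl fun j _ => by ring]

lemma Vr_eq_sum_sq {p : ℕ} (hp : 0 < p) (v : Fin p → ℝ) :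
    Vr p v = (∑ j, (v j - (∑ k, v k)/p)^2)/p := by
  have hp' : (p:ℝ) ≠ 0 := Nat.cast_ne_zero.mpr hp.ne'
  rw [sum_sq_expand p v ((∑ k, v k)/p), Vr]
  field_simp
  ring

lemma Vr_nonneg {p : ℕ} (hp : 0 < p) (v : Fin p → ℝ) : 0 ≤ Vr p v := by
  rw [Vr_eq_sum_sq hp]
  positivity

lemma Vr_eq_zero {p : ℕ} (hp : 0 < p) (v : Fin p → ℝ) (h : Vr p v = 0) :
    v = fun _ => (∑ k, v k)/p := by
  rw [Vr_eq_sum_sq hp] at h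
  have hp' : (0:ℝ) < p := by exact_mod_cast hp
  have hsum : (∑ j, (v j - (∑ k, v k)/p)^2) = 0 := by
    rcases div_eq_zero_iff.mp h with h' | h'
    · exact h'
    · exact absurd h' (Nat.cast_ne_zero.mpr hp.ne')
  have := (Finset.sum_eq_zero_iff_of_nonneg (fun j _ => sq_nonneg _)).mp hsum
  funext j
  have hj := this j (Finset.mem_univ j)
  have := pow_eq_zero_iff (n := 2) (by norm_num) |>.mp hj
  linarith [this]

lemma Vr_translate (p : ℕ) (v : Fin p → ℝ) (c : ℝ) :
    Vr p (fun j => v j + c) = Vr p v := by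
  by_cases hp : 0 < p
  · rw [Vr_eq_sum_sq hp, Vr_eq_sum_sq hp]
    congr 1
    apply Finset.sum_congr rfl
    intro j _
    have : (∑ k, (v k + c)) = (∑ k, v k) + p * c := by
      rw [Finset.sum_add_distrib, Finset.sum_const, Finset.card_univ, Fintype.card_fin,
        nsmul_eq_mul]
    rw [this]
    have hp' : (p:ℝ) ≠ 0 := Nat.cast_ne_zero.mpr hp.ne'
    field_simp
    ring
  · interval_cases p
    simp [Vr]

lemma Vr_smul (p : ℕ) (v : Fin p → ℝ) (c : ℝ) :
    Vr p (fun j => c * v j) = c^2 * Vr p v := by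
  simp only [Vr, mul_pow, ← Finset.mul_sum]
  field_simp

lemma Vr_diff_bound {p : ℕ} (hp : 0 < p) (u a : Fin p → ℝ) (c d : ℝ) (hc : 0 ≤ c)
    (ha : ∀ i, |a i| ≤ c) (hua : ∀ i, |u i - a i| ≤ d) :
    |Vr p u - Vr p a| ≤ 2 * (d * (2*c+d)) := by
  have hd : 0 ≤ d := le_trans (abs_nonneg _) (hua ⟨0, hp⟩)
  have hp' : (0:ℝ) < p := by exact_mod_cast hp
  have hu : ∀ i, |u i| ≤ c + d := by
    intro i
    have h : u i = (u i - a i) + a i := by ring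
    rw [h]
    exact (abs_add_le _ _).trans (by linarith [hua i, ha i])
  have hsq : |(∑ j, (u j)^2) - ∑ j, (a j)^2| ≤ p * (d * (2*c+d)) := by
    rw [← Finset.sum_sub_distrib]
    calc |∑ j, ((u j)^2 - (a j)^2)| ≤ ∑ j, |(u j)^2 - (a j)^2| :=
          Finset.abs_sum_le_sum_abs _ _
      _ ≤ ∑ _j : Fin p, d * (2*c+d) := by
          apply Finset.sum_le_sum
          intro j _
          have h : (u j)^2 - (a j)^2 = (u j - a j) * (u j + a j) := by ring
          rw [h, abs_mul]
          have h2 : |u j + a j| ≤ 2*c+d :=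
            (abs_add_le _ _).trans (by linarith [hu j, ha j])
          exact mul_le_mul (hua j) h2 (abs_nonneg _) hd
      _ = p * (d * (2*c+d)) := by
          rw [Finset.sum_const, Finset.card_univ, Fintype.card_fin, nsmul_eq_mul]
  have hsd : |(∑ j, u j) - ∑ j, a j| ≤ p * d := by
    rw [← Finset.sum_sub_distrib]
    calc |∑ j, (u j - a j)| ≤ ∑ j, |u j - a j| := Finset.abs_sum_le_sum_abs _ _
      _ ≤ ∑ _j : Fin p, d := Finset.sum_le_sum fun j _ => hua j
      _ = p * d := by
          rw [Finset.sum_const, Finset.card_univ, Fintype.card_fin, nsmul_eq_mul]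
  have hss : |(∑ j, u j) + ∑ j, a j| ≤ p * (2*c+d) := by
    calc |(∑ j, u j) + ∑ j, a j| ≤ |∑ j, u j| + |∑ j, a j| := abs_add_le _ _
      _ ≤ (∑ _j : Fin p, (c+d)) + ∑ _j : Fin p, c := by
          gcongr
          · exact (Finset.abs_sum_le_sum_abs _ _).trans
              (Finset.sum_le_sum fun j _ => hu j)
          · exact (Finset.abs_sum_le_sum_abs _ _).trans
              (Finset.sum_le_sum fun j _ => ha j)
      _ = p * (2*c+d) := by
          rw [Finset.sum_const, Finset.sum_const, Finset.card_univ, Fintype.card_fin,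
            nsmul_eq_mul, nsmul_eq_mul]
          ring
  have key : Vr p u - Vr p a
      = ((∑ j, (u j)^2) - ∑ j, (a j)^2)/p
        - (((∑ j, u j) - ∑ j, a j)/p) * (((∑ j, u j) + ∑ j, a j)/p) := by
    rw [Vr, Vr]; field_simp; ring
  rw [key]
  have t1 : |((∑ j, (u j)^2) - ∑ j, (a j)^2)/p| ≤ d * (2*c+d) := by
    rw [abs_div, abs_of_pos hp', div_le_iff₀ hp']
    calc |(∑ j, (u j)^2) - ∑ j, (a j)^2| ≤ p * (d * (2*c+d)) := hsq
      _ = d * (2*c+d) * p := by ring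
  have t2 : |(((∑ j, u j) - ∑ j, a j)/p) * (((∑ j, u j) + ∑ j, a j)/p)| ≤ d * (2*c+d) := by
    rw [abs_mul, abs_div, abs_div, abs_of_pos hp']
    have b1 : |(∑ j, u j) - ∑ j, a j| / p ≤ d := by
      rw [div_le_iff₀ hp']; calc _ ≤ (p:ℝ) * d := hsd
                                _ = d * p := by ring
    have b2 : |(∑ j, u j) + ∑ j, a j| / p ≤ 2*c+d := by
      rw [div_le_iff₀ hp']; calc _ ≤ (p:ℝ) * (2*c+d) := hss
                                _ = (2*c+d) * p := by ring
    exact mul_le_mul b1 b2 (by positivity) hd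
  calc |_ - _| ≤ |((∑ j, (u j)^2) - ∑ j, (a j)^2)/p|
        + |(((∑ j, u j) - ∑ j, a j)/p) * (((∑ j, u j) + ∑ j, a j)/p)| := abs_sub _ _
    _ ≤ d * (2*c+d) + d * (2*c+d) := add_le_add t1 t2
    _ = 2 * (d * (2*c+d)) := by ring

lemma norm_sq_le_sum_sq {p : ℕ} (s : Fin p → ℝ) : ‖s‖^2 ≤ ∑ j, (s j)^2 := by
  have h : ‖s‖ ≤ Real.sqrt (∑ j, (s j)^2) := by
    rw [pi_norm_le_iff_of_nonneg (Real.sqrt_nonneg _)]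
    intro i
    rw [Real.norm_eq_abs]
    exact Real.abs_le_sqrt (Finset.single_le_sum (fun j _ => sq_nonneg (s j))
      (Finset.mem_univ i))
  calc ‖s‖^2 ≤ (Real.sqrt (∑ j, (s j)^2))^2 := pow_le_pow_left₀ (norm_nonneg _) h 2
    _ = _ := Real.sq_sqrt (by positivity)

lemma key_est {p : ℕ} (hp : 0 < p) (z ξv : Fin p → ℝ) (μ V B Em : ℝ) (hV : 0 ≤ V)
    (hB : ∀ i, |ξv i| ≤ B)
    (hz : ∀ i, |z i - μ - (1/2) * ξv i * V| ≤ Em) :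
    |Vr p z - (1/4) * Vr p ξv * V^2| ≤ 2 * (Em * (B * V + Em)) := by
  have hBnn : 0 ≤ B := (abs_nonneg _).trans (hB ⟨0, hp⟩)
  set a : Fin p → ℝ := fun i => (V/2) * ξv i with ha
  set u : Fin p → ℝ := fun i => z i - μ with hu
  have h1 : Vr p z = Vr p u := by
    have h : (fun i => u i + μ) = z := funext fun i => by simp [hu]
    rw [← h, Vr_translate]
  have h2 : Vr p a = (1/4) * Vr p ξv * V^2 := by
    rw [ha, Vr_smul]; ring
  have h3 : ∀ i, |a i| ≤ B * V / 2 := by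
    intro i
    calc |(V/2) * ξv i| = V/2 * |ξv i| := by
          rw [abs_mul, abs_of_nonneg (by linarith : (0:ℝ) ≤ V/2)]
      _ ≤ V/2 * B := mul_le_mul_of_nonneg_left (hB i) (by linarith)
      _ = B * V / 2 := by ring
  have h4 : ∀ i, |u i - a i| ≤ Em := by
    intro i
    rw [show u i - a i = z i - μ - (1/2) * ξv i * V from by rw [hu, ha]; ring]
    exact hz i
  have hdb := Vr_diff_bound hp u a (B*V/2) Em (by positivity) h3 h4
  rw [h1, ← h2]
  calc |Vr p u - Vr p a| ≤ 2 * (Em * (2*(B*V/2)+Em)) := hdb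
    _ = 2 * (Em * (B * V + Em)) := by ring

lemma xi_two_point {p : ℕ} (hp : 2 ≤ p) (Mi : (Fin p → ℝ) → ℝ) (ξi : ℝ → ℝ)
    (J : Set ℝ) (lam eps alpha : ℝ) (hlam : 0 < lam) (halpha : 2 < alpha)
    (hb : ∀ x ∈ J, ∀ s : Fin p → ℝ, ‖s‖ ≤ eps →
      |Mi (fun j => x + s j) - x - (∑ j, s j)/p
        - (1/2) * ξi x * ((∑ j, (s j)^2)/p - ((∑ j, s j)/p)^2)| ≤ lam * ‖s‖ ^ alpha)
    (a b t : ℝ) (ha : a ∈ J) (hbJ : b ∈ J) (ht : 0 < t) (hteps : 2*t ≤ eps)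
    (hab : |b - a| ≤ t) :
    |ξi a - ξi b| ≤ (2 * lam * (1 + (2:ℝ) ^ alpha) * p^2 / (p-1)) * t ^ (alpha - 2) := by
  have hp2 : (2:ℝ) ≤ p := by exact_mod_cast hp
  have p0 : (0:ℝ) < p := by linarith
  have pne : (p:ℝ) ≠ 0 := p0.ne'
  have i0 : Fin p := ⟨0, by omega⟩
  set u : Fin p → ℝ := fun j => if j = i0 then t else 0 with hu
  set s' : Fin p → ℝ := fun j => u j - (b - a) with hs'
  have hsu : ∑ j, u j = t := by simp [hu, Finset.sum_ite_eq']
  have hsu2 : ∑ j, (u j)^2 = t^2 := by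
    rw [Finset.sum_congr rfl (fun j _ => show (u j)^2 = if j = i0 then t^2 else 0 by
      by_cases h : j = i0 <;> simp [hu, h])]
    simp [Finset.sum_ite_eq']
  have hunorm : ‖u‖ ≤ t := by
    rw [pi_norm_le_iff_of_nonneg ht.le]
    intro j
    rw [Real.norm_eq_abs]
    by_cases h : j = i0 <;> simp [hu, h, abs_of_pos ht, ht.le]
  have hs'norm : ‖s'‖ ≤ 2*t := by
    rw [pi_norm_le_iff_of_nonneg (by linarith)]
    intro j
    rw [Real.norm_eq_abs, hs']
    calc |u j - (b - a)| ≤ |u j| + |b - a| := abs_sub _ _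
      _ ≤ t + t := by
          refine add_le_add ?_ hab
          by_cases h : j = i0 <;> simp [hu, h, abs_of_pos ht, ht.le]
      _ = 2*t := by ring
  have hss' : ∑ j, s' j = t - p*(b-a) := by
    simp only [hs']
    rw [Finset.sum_sub_distrib, hsu, Finset.sum_const, Finset.card_univ, Fintype.card_fin,
      nsmul_eq_mul]
  have hss'2 : ∑ j, (s' j)^2 = t^2 - 2*(b-a)*t + p*(b-a)^2 := by
    simp only [hs']
    rw [sum_sq_expand p u (b-a), hsu, hsu2]
  have h1 := hb a ha u (hunorm.trans (by linarith))
  have h2 := hb b hbJ s' (hs'norm.trans hteps)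
  rw [hsu, hsu2] at h1
  rw [hss', hss'2] at h2
  have harg : (fun j => b + s' j) = (fun j => a + u j) := by
    funext j; simp only [hs']; ring
  rw [harg] at h2
  set W : ℝ := t^2*((p:ℝ)-1)/p^2 with hW
  have hWpos : 0 < W := by
    rw [hW]
    apply div_pos (mul_pos (pow_pos ht 2) (by linarith)) (pow_pos p0 2)
  have e1 : t^2/(p:ℝ) - (t/p)^2 = W := by rw [hW]; field_simp
  have e2 : (t^2 - 2*(b-a)*t + p*(b-a)^2)/(p:ℝ) - ((t - p*(b-a))/p)^2 = W := by
    rw [hW]; field_simp; ring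
  rw [e1] at h1
  rw [e2] at h2
  have hb1 : lam * ‖u‖ ^ alpha ≤ lam * t ^ alpha := by
    have := Real.rpow_le_rpow (norm_nonneg u) hunorm (show (0:ℝ) ≤ alpha by linarith)
    exact mul_le_mul_of_nonneg_left this hlam.le
  have hb2 : lam * ‖s'‖ ^ alpha ≤ lam * ((2:ℝ)^alpha * t ^ alpha) := by
    have h' := Real.rpow_le_rpow (norm_nonneg s') hs'norm (show (0:ℝ) ≤ alpha by linarith)
    rw [Real.mul_rpow (by norm_num) ht.le] at h'
    exact mul_le_mul_of_nonneg_left h' hlam.le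
  have hE : (Mi (fun j => a + u j) - a - t/(p:ℝ) - 1/2 * ξi a * W)
      - (Mi (fun j => a + u j) - b - (t - (p:ℝ)*(b-a))/p - 1/2 * ξi b * W)
      = 1/2 * (ξi b - ξi a) * W := by
    field_simp
    ring
  have h3 : 1/2 * |ξi a - ξi b| * W ≤ lam * t^alpha + lam * ((2:ℝ)^alpha * t^alpha) := by
    have htri : |1/2 * (ξi b - ξi a) * W| ≤ lam * ‖u‖ ^ alpha + lam * ‖s'‖ ^ alpha := by
      rw [← hE]
      exact (abs_sub _ _).trans (add_le_add h1 h2)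
    have heq : |1/2 * (ξi b - ξi a) * W| = 1/2 * |ξi a - ξi b| * W := by
      rw [abs_mul, abs_mul, abs_of_pos hWpos, abs_sub_comm]
      norm_num
    rw [heq] at htri
    exact htri.trans (add_le_add hb1 hb2)
  have htα : t ^ alpha = t ^ (alpha - 2) * t^2 := by
    rw [← Real.rpow_natCast t 2, ← Real.rpow_add ht]
    norm_num
  have h4 : |ξi a - ξi b| * W ≤ 2 * lam * (1 + (2:ℝ)^alpha) * (t ^ (alpha-2) * t^2) := by
    rw [← htα]
    nlinarith [h3]
  have hfin := (le_div_iff₀ hWpos).mpr h4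
  calc |ξi a - ξi b| ≤ 2 * lam * (1 + (2:ℝ)^alpha) * (t ^ (alpha-2) * t^2) / W := hfin
    _ = (2 * lam * (1 + (2:ℝ) ^ alpha) * p^2 / (p-1)) * t ^ (alpha - 2) := by
        rw [hW]
        rw [div_div_eq_mul_div, div_mul_eq_mul_div]
        rw [div_eq_div_iff (mul_pos (pow_pos ht 2)
          (show (0:ℝ) < (p:ℝ)-1 by linarith)).ne' (show (0:ℝ) < (p:ℝ)-1 by linarith).ne']
        ring

lemma xi_tendsto {p : ℕ} (hp : 2 ≤ p) (ξi : ℝ → ℝ)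
    (J : Set ℝ) (lam eps alpha : ℝ) (heps : 0 < eps) (halpha : 2 < alpha)
    (hxtp : ∀ (a b t : ℝ), a ∈ J → b ∈ J → 0 < t → 2*t ≤ eps → |b - a| ≤ t →
      |ξi a - ξi b| ≤ (2 * lam * (1 + (2:ℝ) ^ alpha) * p^2 / (p-1)) * t ^ (alpha - 2))
    (c : ℝ) (hc : c ∈ J) (mseq : ℕ → ℝ) (hmem : ∀ᶠ n in atTop, mseq n ∈ J)
    (hconv : Tendsto mseq atTop (nhds c)) :
    Tendsto (fun n => ξi (mseq n)) atTop (nhds (ξi c)) := by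
  have hp2 : (2:ℝ) ≤ p := by exact_mod_cast hp
  set C : ℝ := 2 * lam * (1 + (2:ℝ) ^ alpha) * p^2 / (p-1) with hC
  have hβ : 0 < alpha - 2 := by linarith
  rw [Metric.tendsto_atTop]
  intro ε hε
  have hlim : Tendsto (fun t : ℝ => C * t ^ (alpha - 2)) (nhdsWithin 0 (Set.Ioi 0))
      (nhds 0) := by
    have h0 : Tendsto (fun t : ℝ => t ^ (alpha - 2)) (nhds 0) (nhds 0) := by
      have := (Real.continuousAt_rpow_const 0 (alpha - 2) (Or.inr hβ.le)).tendsto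
      rwa [Real.zero_rpow hβ.ne'] at this
    have h1 : Tendsto (fun t : ℝ => C * t ^ (alpha - 2)) (nhds 0) (nhds (C * 0)) :=
      h0.const_mul C
    rw [mul_zero] at h1
    exact h1.mono_left (nhdsWithin_le_nhds (s := Set.Ioi 0))
  have h1 : ∀ᶠ t : ℝ in nhdsWithin 0 (Set.Ioi 0), C * t ^ (alpha - 2) < ε :=
    hlim.eventually_lt_const hε
  have h2 : ∀ᶠ t : ℝ in nhdsWithin 0 (Set.Ioi 0), 2*t ≤ eps := by
    have h : ∀ᶠ t : ℝ in nhds 0, 2*t ≤ eps := by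
      have hm : Set.Iio (eps/2) ∈ nhds (0:ℝ) := Iio_mem_nhds (by linarith)
      filter_upwards [hm] with t ht
      simp only [Set.mem_Iio] at ht
      linarith
    exact h.filter_mono nhdsWithin_le_nhds
  have h3 : ∀ᶠ t : ℝ in nhdsWithin 0 (Set.Ioi 0), t ∈ Set.Ioi (0:ℝ) :=
    eventually_mem_nhdsWithin
  obtain ⟨t, hlt, hte, htpos⟩ := (h1.and (h2.and h3)).exists
  rw [Set.mem_Ioi] at htpos
  have hdist : ∀ᶠ n in atTop, dist (mseq n) c < t := by
    obtain ⟨N, hN⟩ := Metric.tendsto_atTop.mp hconv t htpos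
    exact eventually_atTop.mpr ⟨N, fun n hn => hN n hn⟩
  obtain ⟨N, hN⟩ := eventually_atTop.mp (hdist.and hmem)
  refine ⟨N, fun n hn => ?_⟩
  obtain ⟨hd, hm⟩ := hN n hn
  have hest := hxtp c (mseq n) t hc hm htpos hte (by
    rw [Real.dist_eq] at hd
    exact le_of_lt hd)
  rw [Real.dist_eq]
  calc |ξi (mseq n) - ξi c| = |ξi c - ξi (mseq n)| := abs_sub_comm _ _
    _ ≤ C * t ^ (alpha - 2) := hest
    _ < ε := hlt

end SpeedAux

open SpeedAux

/-- for a mean-type mapping of symmetric residual means with a unique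
invariant mean K (and Gaussian iterates converging to it), either some iterate of x is
constant, or Var M^{n+1}(x) / (Var M^n(x))² → (1/4)·Var(ξ_{M_1}(K x),…,ξ_{M_p}(K x)). -/
theorem speed_of_convergence (p : ℕ) (hp : 2 ≤ p) (I : Set ℝ) (hIopen : IsOpen I)
    (hIconn : I.OrdConnected) (M : Fin p → (Fin p → ℝ) → ℝ)
    (hmean : ∀ i, ∀ y : Fin p → ℝ, (∀ j, y j ∈ I) →
      M i y ∈ I ∧ (∃ j, y j ≤ M i y) ∧ (∃ j, M i y ≤ y j))
    (hsym : ∀ i, ∀ (y : Fin p → ℝ) (σ : Equiv.Perm (Fin p)), M i (y ∘ σ) = M i y)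
    (hC2 : ∀ i, ∃ U : Set (Fin p → ℝ), IsOpen U ∧ (∀ x ∈ I, (fun _ => x) ∈ U) ∧
      ContDiffOn ℝ 2 (M i) U)
    (ξ : Fin p → ℝ → ℝ)
    (hξ : ∀ i x, ξ i x
      = -(p : ℝ)^2 * fderiv ℝ (fun z => fderiv ℝ (M i) z (Pi.single (⟨1, hp⟩ : Fin p) 1))
          (fun _ => x) (Pi.single (⟨0, by omega⟩ : Fin p) 1))
    (hres : ∀ i, ∀ J : Set ℝ, J ⊆ I → IsCompact J → J.OrdConnected →
      ∃ lam eps alpha : ℝ, 0 < lam ∧ 0 < eps ∧ 2 < alpha ∧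
        ∀ x ∈ J, ∀ s : Fin p → ℝ, ‖s‖ ≤ eps →
          |M i (fun j => x + s j) - x - (∑ j, s j) / p
              - (1 / 2) * ξ i x * ((∑ j, (s j)^2) / p - ((∑ j, s j) / p)^2)|
            ≤ lam * ‖s‖ ^ alpha)
    (K : (Fin p → ℝ) → ℝ)
    (hK : ∀ y : Fin p → ℝ, (∀ j, y j ∈ I) →
      K y ∈ I ∧ (∃ j, y j ≤ K y) ∧ (∃ j, K y ≤ y j))
    (hKinv : ∀ y : Fin p → ℝ, (∀ j, y j ∈ I) → K (fun i => M i y) = K y)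
    (hKuniq : ∀ K' : (Fin p → ℝ) → ℝ,
      (∀ y : Fin p → ℝ, (∀ j, y j ∈ I) →
        K' y ∈ I ∧ (∃ j, y j ≤ K' y) ∧ (∃ j, K' y ≤ y j)) →
      (∀ y : Fin p → ℝ, (∀ j, y j ∈ I) → K' (fun i => M i y) = K' y) →
      ∀ y : Fin p → ℝ, (∀ j, y j ∈ I) → K' y = K y)
    (hconv : ∀ y : Fin p → ℝ, (∀ j, y j ∈ I) →
      Tendsto (fun n => (fun z (i : Fin p) => M i z)^[n] y) atTop (nhds (fun _ => K y)))
    (x : Fin p → ℝ) (hx : ∀ j, x j ∈ I) :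
    (∃ (n₀ : ℕ) (c : ℝ), (fun z (i : Fin p) => M i z)^[n₀] x = fun _ => c) ∨
    Tendsto (fun n : ℕ =>
        ((∑ j, ((fun z (i : Fin p) => M i z)^[n + 1] x j)^2) / p
            - ((∑ j, (fun z (i : Fin p) => M i z)^[n + 1] x j) / p)^2)
          / ((∑ j, ((fun z (i : Fin p) => M i z)^[n] x j)^2) / p
            - ((∑ j, (fun z (i : Fin p) => M i z)^[n] x j) / p)^2)^2)
      atTop
      (nhds ((1 / 4)
        * ((∑ j, (ξ j (K x))^2) / p - ((∑ j, ξ j (K x)) / p)^2))) := by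
  classical
  open Filter Finset in
  by_cases hdeg : ∃ (n₀ : ℕ) (c : ℝ), (fun z (i : Fin p) => M i z)^[n₀] x = fun _ => c
  · exact Or.inl hdeg
  right
  push_neg at hdeg
  have hp0 : 0 < p := by omega
  have hpR : (0:ℝ) < p := by exact_mod_cast hp0
  set F : ℕ → Fin p → ℝ := fun n => (fun z (i : Fin p) => M i z)^[n] x with hF
  show Tendsto (fun n : ℕ => Vr p (F (n+1)) / (Vr p (F n))^2) atTop
    (nhds ((1/4) * Vr p (fun j => ξ j (K x))))
  have hFmem : ∀ n j, F n j ∈ I := by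
    intro n
    induction n with
    | zero => simpa [hF] using hx
    | succ n ih =>
      intro j
      have hstep : F (n+1) = fun i => M i (F n) := by
        rw [hF]
        exact Function.iterate_succ_apply' _ n x
      rw [hstep]
      exact (hmean j (F n) ih).1
  have hstep : ∀ n i, F (n+1) i = M i (F n) := by
    intro n i
    have : F (n+1) = fun i => M i (F n) := by
      rw [hF]
      exact Function.iterate_succ_apply' _ n x
    rw [this]
  set c₀ : ℝ := K x with hc₀
  have hc₀I : c₀ ∈ I := (hK x hx).1
  have hcoord : ∀ j, Tendsto (fun n => F n j) atTop (nhds c₀) := by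
    have h := hconv x hx
    rw [tendsto_pi_nhds] at h
    exact h
  set m : ℕ → ℝ := fun n => (∑ j, F n j)/p with hm
  have hmconv : Tendsto m atTop (nhds c₀) := by
    have hsum : Tendsto (fun n => ∑ j, F n j) atTop (nhds (∑ _j : Fin p, c₀)) :=
      tendsto_finset_sum _ (fun j _ => hcoord j)
    have hdivd := hsum.div_const (p:ℝ)
    have heq : (∑ _j : Fin p, c₀)/(p:ℝ) = c₀ := by
      rw [Finset.sum_const, Finset.card_univ, Fintype.card_fin, nsmul_eq_mul]
      field_simp
    rwa [heq] at hdivd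
  set s : ℕ → Fin p → ℝ := fun n j => F n j - m n with hs
  have hsum0 : ∀ n, ∑ j, s n j = 0 := by
    intro n
    simp only [hs]
    rw [Finset.sum_sub_distrib, Finset.sum_const, Finset.card_univ, Fintype.card_fin,
      nsmul_eq_mul, hm]
    field_simp
    ring
  have hVs : ∀ n, Vr p (F n) = (∑ j, (s n j)^2)/p := by
    intro n
    have h1 : Vr p (F n) = Vr p (s n) := by
      have h : (fun j => s n j + m n) = F n := funext fun j => by simp [hs]
      rw [← h, Vr_translate]
    rw [h1, Vr, hsum0 n]
    norm_num
  have hVpos : ∀ n, 0 < Vr p (F n) := by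
    intro n
    rcases (Vr_nonneg hp0 (F n)).lt_or_eq with h | h
    · exact h
    · exfalso
      exact hdeg n ((∑ k, F n k)/p) (Vr_eq_zero hp0 (F n) h.symm)
  have hspos : ∀ n, 0 < ‖s n‖ := by
    intro n
    rcases (norm_nonneg (s n)).lt_or_eq with h | h
    · exact h
    · exfalso
      have h0 : s n = 0 := norm_eq_zero.mp h.symm
      have : Vr p (F n) = 0 := by
        rw [hVs n, h0]
        simp
      exact absurd this (hVpos n).ne'
  have hsnorm0 : Tendsto (fun n => ‖s n‖) atTop (nhds 0) := by
    have hv : Tendsto (fun n => s n) atTop (nhds (0 : Fin p → ℝ)) := by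
      rw [tendsto_pi_nhds]
      intro j
      have := (hcoord j).sub hmconv
      rw [sub_self] at this
      exact this
    have := hv.norm
    rwa [norm_zero] at this
  -- the compact interval J
  obtain ⟨r, hr, hball⟩ := Metric.isOpen_iff.mp hIopen c₀ hc₀I
  set J : Set ℝ := Set.Icc (c₀ - r/2) (c₀ + r/2) with hJ
  have hJI : J ⊆ I := by
    intro y hy
    apply hball
    rw [Metric.mem_ball, Real.dist_eq]
    obtain ⟨hy1, hy2⟩ := hy
    rw [abs_lt]
    constructor <;> linarith
  have hc₀J : c₀ ∈ J := ⟨by linarith, by linarith⟩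
  have hmemJ : ∀ᶠ n in atTop, m n ∈ J :=
    hmconv (Icc_mem_nhds (by linarith) (by linarith))
  -- residual constants
  choose lam eps alpha hlam heps halpha hbound using fun i =>
    hres i J hJI isCompact_Icc Set.ordConnected_Icc
  have hne : (Finset.univ : Finset (Fin p)).Nonempty := ⟨⟨0, hp0⟩, Finset.mem_univ _⟩
  set lamM : ℝ := ∑ i, lam i with hlamM
  have hlamMpos : 0 < lamM := Finset.sum_pos (fun i _ => hlam i) hne
  have hlamle : ∀ i, lam i ≤ lamM :=
    fun i => Finset.single_le_sum (fun j _ => (hlam j).le) (Finset.mem_univ i)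
  set αm : ℝ := Finset.univ.inf' hne alpha with hαm
  have hαm2 : 2 < αm := (Finset.lt_inf'_iff hne).mpr (fun i _ => halpha i)
  have hαmle : ∀ i, αm ≤ alpha i := fun i => Finset.inf'_le _ (Finset.mem_univ i)
  set εm : ℝ := Finset.univ.inf' hne eps with hεm
  have hεmpos : 0 < εm := (Finset.lt_inf'_iff hne).mpr (fun i _ => heps i)
  have hεmle : ∀ i, εm ≤ eps i := fun i => Finset.inf'_le _ (Finset.mem_univ i)
  -- ξ i (m n) → ξ i c₀
  have hξconv : ∀ i, Tendsto (fun n => ξ i (m n)) atTop (nhds (ξ i c₀)) := by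
    intro i
    exact xi_tendsto hp (ξ i) J (lam i) (eps i) (alpha i) (heps i) (halpha i)
      (fun a b t ha hb ht hte hab =>
        xi_two_point hp (M i) (ξ i) J (lam i) (eps i) (alpha i) (hlam i) (halpha i)
          (hbound i) a b t ha hb ht hte hab)
      c₀ hc₀J m hmemJ hmconv
  -- bound B for ξ values
  set B : ℝ := (∑ i, |ξ i c₀|) + 1 with hB
  have hBnn : 0 ≤ B := by positivity
  have hBev : ∀ᶠ n in atTop, ∀ i, |ξ i (m n)| ≤ B := by
    rw [Filter.eventually_all]
    intro i
    have h1 : ∀ᶠ n in atTop, dist (ξ i (m n)) (ξ i c₀) < 1 :=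
      (hξconv i) (Metric.ball_mem_nhds _ one_pos)
    filter_upwards [h1] with n hn
    rw [Real.dist_eq] at hn
    have h2 : |ξ i c₀| ≤ ∑ k, |ξ k c₀| :=
      Finset.single_le_sum (f := fun k => |ξ k c₀|) (fun k _ => abs_nonneg _) (Finset.mem_univ i)
    calc |ξ i (m n)| = |(ξ i (m n) - ξ i c₀) + ξ i c₀| := by
          congr 1
          ring
      _ ≤ |ξ i (m n) - ξ i c₀| + |ξ i c₀| := abs_add_le _ _
      _ ≤ B := by rw [hB]; linarith
  -- D sequence
  set β : ℝ := αm - 2 with hβ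
  have hβpos : 0 < β := by rw [hβ]; linarith
  set D : ℕ → ℝ := fun n => p * lamM * ‖s n‖ ^ β with hD
  have hDnn : ∀ n, 0 ≤ D n := by
    intro n
    rw [hD]
    have := Real.rpow_nonneg (norm_nonneg (s n)) β
    positivity
  have hDconv : Tendsto D atTop (nhds 0) := by
    have h0 : Tendsto (fun y : ℝ => y ^ β) (nhds 0) (nhds 0) := by
      have := (Real.continuousAt_rpow_const 0 β (Or.inr hβpos.le)).tendsto
      rwa [Real.zero_rpow hβpos.ne'] at this
    have h1 := (h0.comp hsnorm0).const_mul ((p:ℝ) * lamM)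
    rw [mul_zero] at h1
    exact h1
  set g : ℕ → ℝ := fun n => (1/4) * Vr p (fun i => ξ i (m n)) with hg
  have hgconv : Tendsto g atTop (nhds ((1/4) * Vr p (fun j => ξ j c₀))) := by
    have h1 : Tendsto (fun n => (∑ i, (ξ i (m n))^2)/(p:ℝ) - ((∑ i, ξ i (m n))/(p:ℝ))^2)
        atTop (nhds ((∑ i, (ξ i c₀)^2)/(p:ℝ) - ((∑ i, ξ i c₀)/(p:ℝ))^2)) := by
      apply Tendsto.sub
      · exact (tendsto_finset_sum _ fun i _ => (hξconv i).pow 2).div_const _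
      · exact ((tendsto_finset_sum _ fun i _ => hξconv i).div_const _).pow 2
    exact h1.const_mul (1/4)
  set R : ℕ → ℝ := fun n => Vr p (F (n+1)) / (Vr p (F n))^2 with hR
  -- eventual smallness
  have hsm1 : ∀ᶠ n in atTop, ‖s n‖ ≤ 1 := by
    have := hsnorm0.eventually_lt_const one_pos
    filter_upwards [this] with n hn using hn.le
  have hsmε : ∀ᶠ n in atTop, ‖s n‖ ≤ εm := by
    have := hsnorm0.eventually_lt_const hεmpos
    filter_upwards [this] with n hn using hn.le
  -- main eventual bound
  have hmain : ∀ᶠ n in atTop, |R n - g n| ≤ 2*B*(D n) + 2*(D n)^2 := by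
    filter_upwards [hmemJ, hsm1, hsmε, hBev] with n hmJ h1 hε hBn
    have hVn := hVpos n
    have hEmnn : 0 ≤ lamM * ‖s n‖ ^ αm := by
      have := Real.rpow_nonneg (norm_nonneg (s n)) αm
      positivity
    -- residual estimate per coordinate
    have hz : ∀ i, |F (n+1) i - m n - (1/2) * ξ i (m n) * Vr p (F n)|
        ≤ lamM * ‖s n‖ ^ αm := by
      intro i
      have happ := hbound i (m n) hmJ (s n) (hε.trans (hεmle i))
      have harg : (fun j => m n + s n j) = F n := funext fun j => by simp [hs]
      rw [harg, hsum0 n] at happ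
      rw [← hstep n i] at happ
      have hsimp : (0:ℝ)/(p:ℝ) = 0 := zero_div _
      rw [hsimp] at happ
      rw [show F (n+1) i - m n - 0 - 1/2 * ξ i (m n) * ((∑ j, (s n j)^2)/(p:ℝ) - 0^2)
          = F (n+1) i - m n - (1/2) * ξ i (m n) * ((∑ j, (s n j)^2)/(p:ℝ)) from by ring]
        at happ
      rw [← hVs n] at happ
      calc |F (n+1) i - m n - (1/2) * ξ i (m n) * Vr p (F n)|
          ≤ lam i * ‖s n‖ ^ (alpha i) := happ
        _ ≤ lamM * ‖s n‖ ^ αm := by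
            apply mul_le_mul (hlamle i)
              (Real.rpow_le_rpow_of_exponent_ge (hspos n) h1 (hαmle i))
              (Real.rpow_nonneg (norm_nonneg _) _) hlamMpos.le
    have hEmD : lamM * ‖s n‖ ^ αm ≤ D n * Vr p (F n) := by
      have h2 : ‖s n‖ ^ αm = ‖s n‖ ^ β * ‖s n‖^(2:ℕ) := by
        rw [← Real.rpow_natCast (‖s n‖) 2, ← Real.rpow_add (hspos n), hβ]
        norm_num
      have h3 : ‖s n‖^(2:ℕ) ≤ p * Vr p (F n) := by
        rw [hVs n]
        have h4 : (p:ℝ) * ((∑ j, (s n j)^2)/p) = ∑ j, (s n j)^2 := by field_simp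
        rw [h4]
        exact norm_sq_le_sum_sq (s n)
      calc lamM * ‖s n‖ ^ αm = lamM * ‖s n‖ ^ β * ‖s n‖^(2:ℕ) := by rw [h2]; ring
        _ ≤ lamM * ‖s n‖ ^ β * ((p:ℝ) * Vr p (F n)) := by
            apply mul_le_mul_of_nonneg_left h3
            have := Real.rpow_nonneg (norm_nonneg (s n)) β
            positivity
        _ = D n * Vr p (F n) := by rw [hD]; ring
    have hkey := key_est hp0 (F (n+1)) (fun i => ξ i (m n)) (m n) (Vr p (F n)) B
      (lamM * ‖s n‖ ^ αm) (hVpos n).le hBn hz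
    have hRdiff : R n - g n
        = (Vr p (F (n+1)) - (1/4) * Vr p (fun i => ξ i (m n)) * (Vr p (F n))^2)
          / (Vr p (F n))^2 := by
      rw [hR, hg]
      rw [eq_div_iff (pow_pos (hVpos n) 2).ne']
      field_simp [(hVpos n).ne']
    rw [hRdiff, abs_div, abs_of_pos (pow_pos (hVpos n) 2),
      div_le_iff₀ (pow_pos (hVpos n) 2)]
    have h5 : (lamM * ‖s n‖ ^ αm) * (B * Vr p (F n))
        ≤ (D n * Vr p (F n)) * (B * Vr p (F n)) :=
      mul_le_mul_of_nonneg_right hEmD (by positivity)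
    have h6 : (lamM * ‖s n‖ ^ αm) * (lamM * ‖s n‖ ^ αm)
        ≤ (D n * Vr p (F n)) * (D n * Vr p (F n)) :=
      mul_le_mul hEmD hEmD hEmnn (by positivity)
    calc |Vr p (F (n+1)) - (1/4) * Vr p (fun i => ξ i (m n)) * (Vr p (F n))^2|
        ≤ 2 * ((lamM * ‖s n‖ ^ αm) * (B * Vr p (F n) + lamM * ‖s n‖ ^ αm)) := hkey
      _ = 2*((lamM * ‖s n‖ ^ αm) * (B * Vr p (F n)))
            + 2*((lamM * ‖s n‖ ^ αm) * (lamM * ‖s n‖ ^ αm)) := by ring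
      _ ≤ 2*((D n * Vr p (F n)) * (B * Vr p (F n)))
            + 2*((D n * Vr p (F n)) * (D n * Vr p (F n))) := by linarith [h5, h6]
      _ = (2*B*(D n) + 2*(D n)^2) * (Vr p (F n))^2 := by ring
  -- finish
  have hbound0 : Tendsto (fun n => 2*B*(D n) + 2*(D n)^2) atTop (nhds 0) := by
    have h1 : Tendsto (fun n => 2*B*(D n)) atTop (nhds (2*B*0)) := hDconv.const_mul _
    have h2 : Tendsto (fun n => 2*(D n)^2) atTop (nhds (2*0^2)) :=
      (hDconv.pow 2).const_mul 2
    have h3 := h1.add h2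
    rw [show (2*B*0 + 2*0^2 : ℝ) = 0 by norm_num] at h3
    exact h3
  have hdiff0 : Tendsto (fun n => R n - g n) atTop (nhds 0) := by
    apply squeeze_zero_norm' _ hbound0
    filter_upwards [hmain] with n hn
    rwa [Real.norm_eq_abs]
  have hfinal := hdiff0.add hgconv
  rw [zero_add] at hfinal
  have heq : (fun n => (R n - g n) + g n) = R := funext fun n => by ring
  rw [heq] at hfinal
  exact hfinal
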